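/- arXiv:2006.06838 — 3 statements merged into one kernel-verified Lean document; each statement's English description precedes it below -/
import Mathlib

section
/- There exist a constant K > 0 and N ∈ ℕ such that for all n ≥ N and all pairs (z,c) ∈ Ω_n (i.e. z,c ∈ ℕ with z ≤ n^{1/3} r and c ≤ n^{2/3} T r), one has both |μ(n,z,c) − z| ≤ K and |σ²(n,z,c) − z| ≤ K. (Lemma 3.1, 'in particular' bounds.) -/
/-!
Put `t = n^(-1/3)`, so that `p_n = t³ + λt⁴`, `z t ≤ r` and `c t² ≤ T r`. Bernoulli's inequality
and its second-order companion squeeze `q` between `s - s²/2` and `s`, where `s = z p_n`. Now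
`n s = z (1 + λt)` lies within `|λ| r` of `z`, while `n s² ≤ 4 r²` and `c s ≤ 2 T r²`; these three
errors control `μ - z = n q - c q - z` and, through `σ² = μ - μ q` with `0 ≤ μ q ≤ n s²`, also
`σ² - z`.
-/

section BinomialSuccessProbability

variable {R : Type*} [Field R] [LinearOrder R] [IsStrictOrderedRing R] {p : R}

lemma one_sub_pow_le_one_sub_mul_add_sq (hp0 : 0 ≤ p) (hp1 : p ≤ 1) (z : ℕ) :
    (1 - p) ^ z ≤ 1 - z * p + (z * p) ^ 2 / 2 := by
  induction z with
  | zero => simp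
  | succ k ih =>
    have hk : (0 : R) ≤ k := k.cast_nonneg
    calc (1 - p) ^ (k + 1) ≤ (1 - k * p + (k * p) ^ 2 / 2) * (1 - p) := by
          rw [pow_succ]; gcongr
      _ ≤ 1 - ↑(k + 1) * p + (↑(k + 1) * p) ^ 2 / 2 := by
          push_cast; nlinarith [mul_nonneg (mul_nonneg hk hk) (pow_nonneg hp0 3)]

lemma one_sub_one_sub_pow_nonneg (hp0 : 0 ≤ p) (hp1 : p ≤ 1) (z : ℕ) :
    0 ≤ 1 - (1 - p) ^ z :=
  sub_nonneg.2 (pow_le_one₀ (by linarith) (by linarith))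

lemma one_sub_one_sub_pow_le_mul (hp : p ≤ 2) (z : ℕ) : 1 - (1 - p) ^ z ≤ z * p := by
  have := one_add_mul_le_pow (a := -p) (by linarith) z
  rw [← sub_eq_add_neg] at this
  linarith

lemma mul_sub_sq_le_one_sub_one_sub_pow (hp0 : 0 ≤ p) (hp1 : p ≤ 1) (z : ℕ) :
    z * p - (z * p) ^ 2 / 2 ≤ 1 - (1 - p) ^ z := by
  linarith [one_sub_pow_le_one_sub_mul_add_sq hp0 hp1 z]

end BinomialSuccessProbability

lemma abs_mean_sub_le_and_abs_variance_sub_le {R : Type*} [Field R] [LinearOrder R]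
    [IsStrictOrderedRing R] {x c z s q a b d : R} (hc0 : 0 ≤ c) (hcx : c ≤ x) (hq0 : 0 ≤ q)
    (hqs : q ≤ s) (hsq : s - s ^ 2 / 2 ≤ q) (ha : |x * s - z| ≤ a) (hb : x * s ^ 2 ≤ b)
    (hd : c * s ≤ d) :
    |(x - c) * q - z| ≤ a + 2 * b + d ∧ |(x - c) * q * (1 - q) - z| ≤ a + 2 * b + d := by
  obtain ⟨ha₁, ha₂⟩ := abs_le.1 ha
  have hx0 : 0 ≤ x := hc0.trans hcx
  have hxq : x * q ≤ x * s := mul_le_mul_of_nonneg_left hqs hx0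
  have hxq' : x * s - x * s ^ 2 / 2 ≤ x * q := by nlinarith
  have hcq : c * q ≤ d := (mul_le_mul_of_nonneg_left hqs hc0).trans hd
  have hmq0 : 0 ≤ (x - c) * q * q := by have := sub_nonneg.2 hcx; positivity
  have hmq : (x - c) * q * q ≤ b := by
    calc (x - c) * q * q ≤ x * q ^ 2 := by nlinarith [mul_nonneg hc0 (sq_nonneg q)]
      _ ≤ x * s ^ 2 := by gcongr
      _ ≤ b := hb
  have hb0 : 0 ≤ b := hmq0.trans hmq
  have hcq0 : 0 ≤ c * q := mul_nonneg hc0 hq0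
  constructor <;> rw [abs_le] <;> constructor <;> linarith

section Scaling

variable {lam r T t x z c p : ℝ}

lemma scaled_prob_mem_Icc (ht : 0 ≤ t) (hlam : |lam| * t ≤ 1) :
    t ^ 3 + lam * t ^ 4 ∈ Set.Icc 0 (2 * t ^ 3) := by
  have h : |lam * t| ≤ 1 := by rwa [abs_mul, abs_of_nonneg ht]
  rw [abs_le] at h
  have ht3 : 0 ≤ t ^ 3 := pow_nonneg ht 3
  exact ⟨by nlinarith, by nlinarith⟩

lemma abs_mul_mul_scaled_prob_sub_le (ht : 0 ≤ t) (hx : x * t ^ 3 = 1) (hz0 : 0 ≤ z)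
    (hz : z * t ≤ r) : |x * (z * (t ^ 3 + lam * t ^ 4)) - z| ≤ |lam| * r := by
  have : x * (z * (t ^ 3 + lam * t ^ 4)) - z = lam * (z * t) := by
    linear_combination z * (1 + lam * t) * hx
  rw [this, abs_mul, abs_of_nonneg (mul_nonneg hz0 ht)]
  exact mul_le_mul_of_nonneg_left hz (abs_nonneg lam)

lemma mul_mul_sq_le_four_mul_sq (ht0 : 0 ≤ t) (ht1 : t ≤ 1) (hx : x * t ^ 3 = 1) (hp0 : 0 ≤ p)
    (hp : p ≤ 2 * t ^ 3) (hz0 : 0 ≤ z) (hz : z * t ≤ r) : x * (z * p) ^ 2 ≤ 4 * r ^ 2 := by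
  have hx0 : 0 ≤ x := by nlinarith [pow_nonneg ht0 3]
  calc x * (z * p) ^ 2 ≤ x * (z * (2 * t ^ 3)) ^ 2 := by gcongr
    _ = 4 * (z * t) ^ 2 * t * (x * t ^ 3) := by ring
    _ ≤ 4 * r ^ 2 * 1 * 1 := by rw [hx]; gcongr
    _ = 4 * r ^ 2 := by ring

lemma mul_mul_le_two_mul_mul_sq (ht0 : 0 ≤ t) (hp : p ≤ 2 * t ^ 3) (hz0 : 0 ≤ z) (hz : z * t ≤ r)
    (hc0 : 0 ≤ c) (hc : c * t ^ 2 ≤ T * r) : c * (z * p) ≤ 2 * T * r ^ 2 := by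
  calc c * (z * p) ≤ c * (z * (2 * t ^ 3)) := by gcongr
    _ = 2 * (c * t ^ 2) * (z * t) := by ring
    _ ≤ 2 * (T * r) * r := by
        have hTr : 0 ≤ T * r := (mul_nonneg hc0 (sq_nonneg t)).trans hc
        gcongr
    _ = 2 * T * r ^ 2 := by ring

lemma le_of_mul_sq_le (ht0 : 0 ≤ t) (hx : x * t ^ 3 = 1)
    (hc : c * t ^ 2 ≤ T * r) (hTr : T * r * t ≤ 1) : c ≤ x := by
  have ht : 0 < t := ht0.lt_of_ne (by rintro rfl; simp at hx)
  refine le_of_mul_le_mul_right ?_ (pow_pos ht 3)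
  calc c * t ^ 3 = c * t ^ 2 * t := by ring
    _ ≤ T * r * t := mul_le_mul_of_nonneg_right hc ht0
    _ ≤ x * t ^ 3 := hx ▸ hTr

end Scaling

lemma abs_mean_sub_le_and_abs_variance_sub_le_of_scale {lam r T t x c : ℝ} {z : ℕ} (ht0 : 0 < t)
    (hlam : |lam| * t ≤ 1) (hTr : T * r * t ≤ 1) (ht : 2 * t ≤ 1) (hx : x * t ^ 3 = 1)
    (hz : z ≤ t⁻¹ * r) (hc0 : 0 ≤ c) (hc : c ≤ (t ^ 2)⁻¹ * T * r) :
    |(x - c) * (1 - (1 - (t ^ 3 + lam * t ^ 4)) ^ z) - z| ≤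
        |lam| * r + 2 * (4 * r ^ 2) + 2 * T * r ^ 2 ∧
      |(x - c) * (1 - (1 - (t ^ 3 + lam * t ^ 4)) ^ z) * (1 - (1 - (1 - (t ^ 3 + lam * t ^ 4)) ^ z))
        - z| ≤ |lam| * r + 2 * (4 * r ^ 2) + 2 * T * r ^ 2 := by
  have hzt : (z : ℝ) * t ≤ r := (le_inv_mul_iff₀' ht0).1 hz
  have hct : c * t ^ 2 ≤ T * r := (le_inv_mul_iff₀' (by positivity)).1 (by rwa [mul_assoc] at hc)
  have ht1 : t ≤ 1 := by linarith
  obtain ⟨hp0, hp2⟩ := scaled_prob_mem_Icc ht0.le hlam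
  have hp1 : t ^ 3 + lam * t ^ 4 ≤ 1 := by
    linarith [pow_le_of_le_one ht0.le ht1 three_ne_zero]
  exact abs_mean_sub_le_and_abs_variance_sub_le hc0 (le_of_mul_sq_le ht0.le hx hct hTr)
    (one_sub_one_sub_pow_nonneg hp0 hp1 z) (one_sub_one_sub_pow_le_mul (by linarith) z)
    (mul_sub_sq_le_one_sub_one_sub_pow hp0 hp1 z)
    (abs_mul_mul_scaled_prob_sub_le ht0.le hx z.cast_nonneg hzt)
    (mul_mul_sq_le_four_mul_sq ht0.le ht1 hx hp0 hp2 z.cast_nonneg hzt)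
    (mul_mul_le_two_mul_mul_sq ht0.le hp2 z.cast_nonneg hzt hc0 hct)

lemma Real.rpow_intCast_div_three {x : ℝ} (hx : 0 ≤ x) (k : ℤ) :
    x ^ ((k : ℝ) / 3) = (x ^ ((1 : ℝ) / 3)) ^ k := by
  rw [← Real.rpow_intCast, ← Real.rpow_mul hx]
  ring_nf

lemma exists_inv_cube_root {x M : ℝ} (hM : 0 < M) (hMx : M ^ 3 ≤ x) :
    ∃ t, 0 < t ∧ t * M ≤ 1 ∧ x * t ^ 3 = 1 ∧ x⁻¹ = t ^ 3 ∧ x ^ ((1 : ℝ) / 3) = t⁻¹ ∧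
      x ^ ((2 : ℝ) / 3) = (t ^ 2)⁻¹ ∧ x ^ (-(4 : ℝ) / 3) = t ^ 4 := by
  have hx : 0 < x := (pow_pos hM 3).trans_le hMx
  have hpow (k : ℤ) := Real.rpow_intCast_div_three hx.le k
  set A := x ^ ((1 : ℝ) / 3)
  have hA0 : 0 < A := Real.rpow_pos_of_pos hx _
  have hA3 : x = A ^ 3 := by simpa using hpow 3
  have hMA : M ≤ A := (pow_le_pow_iff_left₀ hM.le hA0.le three_ne_zero).1 (hA3 ▸ hMx)
  refine ⟨A⁻¹, inv_pos.2 hA0, (mul_comm _ _).trans_le ((mul_inv_le_iff₀ hA0).2 (by simpa)), ?_,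
    by rw [hA3, inv_pow], (inv_inv A).symm, by simpa using hpow 2, by simpa using hpow (-4)⟩
  rw [hA3, inv_pow, mul_inv_cancel₀ (by positivity)]

/-- Lemma 3.1 ("in particular" bounds). With `p n = n⁻¹ + λ n^(-4/3)`,
`q n z = 1 - (1 - p n)^z`, mean `μ n z c = (n - c) * q n z` and variance
`σ² n z c = (n - c) * q n z * (1 - q n z)` of `Bin(n - c, q n z)`, there exist `K > 0`
and `N` such that for all `n ≥ N` and all `(z, c) ∈ Ω_n` (i.e. `z ≤ n^(1/3) r` and
`c ≤ n^(2/3) T r`), both `|μ(n,z,c) - z| ≤ K` and `|σ²(n,z,c) - z| ≤ K`. -/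
theorem stmt_3 (lam r T : ℝ) (hr : 0 < r) (hT : 0 < T)
    (p : ℕ → ℝ) (hp : ∀ n : ℕ, p n = (n : ℝ)⁻¹ + lam * (n : ℝ) ^ (-(4 : ℝ) / 3))
    (q : ℕ → ℕ → ℝ) (hq : ∀ (n : ℕ) (z : ℕ), q n z = 1 - (1 - p n) ^ z)
    (μ : ℕ → ℕ → ℕ → ℝ)
    (hμ : ∀ (n : ℕ) (z c : ℕ), μ n z c = ((n : ℝ) - (c : ℝ)) * q n z)
    (σsq : ℕ → ℕ → ℕ → ℝ)
    (hσ : ∀ (n : ℕ) (z c : ℕ), σsq n z c = ((n : ℝ) - (c : ℝ)) * q n z * (1 - q n z)) :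
    ∃ K : ℝ, 0 < K ∧ ∃ N : ℕ, ∀ n : ℕ, N ≤ n → ∀ z c : ℕ,
      (z : ℝ) ≤ (n : ℝ) ^ ((1 : ℝ) / 3) * r →
      (c : ℝ) ≤ (n : ℝ) ^ ((2 : ℝ) / 3) * T * r →
      |μ n z c - (z : ℝ)| ≤ K ∧ |σsq n z c - (z : ℝ)| ≤ K := by
  set M := max (max |lam| (T * r)) 2
  obtain ⟨N, hN⟩ := exists_nat_ge (M ^ 3)
  refine ⟨|lam| * r + 2 * (4 * r ^ 2) + 2 * T * r ^ 2, by positivity, N, fun n hn z c hz hc => ?_⟩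
  obtain ⟨t, ht0, htM, hx, hinv, h13, h23, h43⟩ :=
    exists_inv_cube_root (by positivity) (hN.trans (Nat.cast_le.2 hn))
  have hle (a : ℝ) (ha : a ≤ M) : a * t ≤ 1 := by nlinarith
  rw [h13] at hz
  rw [h23] at hc
  rw [hμ, hσ, hq, hp, hinv, h43]
  exact abs_mean_sub_le_and_abs_variance_sub_le_of_scale ht0
    (hle _ ((le_max_left _ _).trans (le_max_left _ _)))
    (hle _ ((le_max_right _ _).trans (le_max_left _ _))) (hle 2 (le_max_right _ _)) hx
    hz c.cast_nonneg hc
end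

section
/- There exist a constant K > 0 and N ∈ ℕ such that for all n ≥ N and all pairs (z,c) ∈ Ω_n^θ (i.e. z,c ∈ ℕ with z ≤ n^{1/3} θ_n² r and c ≤ n^{2/3} θ_n T r), one has |σ²_θ(n,z,c) − z − n^{−1/3} z (λ θ_n − n^{−2/3} c)| ≤ K (θ_n⁴ n^{−1/3} + 1). (Lemma 6.1, variance expansion.) -/
/-!
Write `u = n^(1/3)`, so that `p = u⁻³ (1 + λ θ / u)` and `z p = O(θ² / u²)` on `Ω`. Bernoulli's
inequality and its second-order companion give `|q (1 - q) - z p| ≤ (3/2) (z p)²`. Expanding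
`(n - c) z p` exactly, the difference to be bounded is `(n - c) (q (1 - q) - z p) - λ θ z c / u⁴`,
and both terms are `O(θ⁴ / u)` because `c ≤ n` and `z c = O(u³ θ³)`.
-/

open Filter

lemma one_sub_pow_le {x : ℝ} (hx0 : 0 ≤ x) (hx1 : x ≤ 1) (z : ℕ) :
    (1 - x) ^ z ≤ 1 - z * x + (z * x) ^ 2 / 2 := by
  induction z with
  | zero => norm_num
  | succ k ih =>
    calc (1 - x) ^ (k + 1) = (1 - x) ^ k * (1 - x) := pow_succ _ _
      _ ≤ (1 - k * x + (k * x) ^ 2 / 2) * (1 - x) :=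
        mul_le_mul_of_nonneg_right ih (by linarith)
      _ ≤ 1 - ((k + 1 : ℕ) : ℝ) * x + (((k + 1 : ℕ) : ℝ) * x) ^ 2 / 2 := by
        push_cast
        nlinarith [sq_nonneg x, mul_nonneg (mul_nonneg (sq_nonneg (k : ℝ)) hx0) (sq_nonneg x)]

lemma abs_one_sub_pow_mul_pow_sub_le {x : ℝ} (hx0 : 0 ≤ x) (hx1 : x ≤ 1) (z : ℕ) :
    |(1 - (1 - x) ^ z) * (1 - x) ^ z - z * x| ≤ 3 / 2 * (z * x) ^ 2 := by
  set q := 1 - (1 - x) ^ z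
  have hq_le : q ≤ z * x := by
    have := one_add_mul_le_pow (a := -x) (by linarith) z
    simp only [← sub_eq_add_neg, mul_neg] at this
    linarith
  have hq_ge : z * x - (z * x) ^ 2 / 2 ≤ q := by linarith [one_sub_pow_le hx0 hx1 z]
  have hq0 : 0 ≤ q := sub_nonneg.2 (pow_le_one₀ (by linarith) (by linarith))
  have hq_sq : q ^ 2 ≤ (z * x) ^ 2 := pow_le_pow_left₀ hq0 hq_le 2
  have hpow : (1 - x) ^ z = 1 - q := by ring
  rw [hpow, abs_le]
  constructor <;> nlinarith

lemma inv_pow_three_add_mul_inv_pow_four_mem_Icc {lam θ u : ℝ} (hu : 0 < u) (hθ : 0 ≤ θ)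
    (hlam : |lam| * θ ≤ u) :
    (u ^ 3)⁻¹ + lam * θ * (u ^ 4)⁻¹ ∈ Set.Icc 0 (2 * (u ^ 3)⁻¹) := by
  have hrw : (u ^ 3)⁻¹ + lam * θ * (u ^ 4)⁻¹ = (u ^ 3)⁻¹ * (1 + lam * θ / u) := by
    field_simp
  have hratio : |lam * θ / u| ≤ 1 := by
    rw [abs_div, abs_mul, abs_of_nonneg hθ, abs_of_pos hu, div_le_one hu]
    exact hlam
  obtain ⟨hlo, hhi⟩ := abs_le.1 hratio
  rw [hrw]
  constructor
  · exact mul_nonneg (by positivity) (by linarith)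
  · rw [mul_comm 2]
    exact mul_le_mul_of_nonneg_left (by linarith) (by positivity)

lemma abs_variance_expansion_le {lam r T θ u p q : ℝ} {z c : ℕ} (hu : 2 ≤ u ^ 3)
    (hθ : 0 ≤ θ) (hlam : |lam| * θ ≤ u) (hTr : T * r * θ ≤ u)
    (hp : p = (u ^ 3)⁻¹ + lam * θ * (u ^ 4)⁻¹) (hq : q = 1 - (1 - p) ^ z)
    (hz : (z : ℝ) ≤ u * θ ^ 2 * r) (hc : (c : ℝ) ≤ u ^ 2 * θ * T * r) :
    |(u ^ 3 - c) * q * (1 - q) - z - u⁻¹ * z * (lam * θ - (u ^ 2)⁻¹ * c)|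
      ≤ (6 * r ^ 2 + |lam| * T * r ^ 2) * (θ ^ 4 * u⁻¹) := by
  have hu0 : 0 < u := (Odd.pow_pos_iff (by decide)).1 (by linarith : (0 : ℝ) < u ^ 3)
  have hz0 : (0 : ℝ) ≤ z := z.cast_nonneg
  have hc0 : (0 : ℝ) ≤ c := c.cast_nonneg
  obtain ⟨hp0, hp2⟩ := hp ▸ inv_pow_three_add_mul_inv_pow_four_mem_Icc hu0 hθ hlam
  have hp1 : p ≤ 1 := hp2.trans ((mul_inv_le_iff₀ (by positivity)).2 (by linarith))
  have hzp : (z : ℝ) * p ≤ 2 * r * θ ^ 2 * (u ^ 2)⁻¹ :=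
    calc (z : ℝ) * p ≤ (u * θ ^ 2 * r) * (2 * (u ^ 3)⁻¹) :=
          mul_le_mul hz hp2 hp0 (hz0.trans hz)
      _ = 2 * r * θ ^ 2 * (u ^ 2)⁻¹ := by field_simp
  have hc_le : (c : ℝ) ≤ u ^ 3 :=
    calc (c : ℝ) ≤ u ^ 2 * (T * r * θ) := by linarith
      _ ≤ u ^ 2 * u := mul_le_mul_of_nonneg_left hTr (by positivity)
      _ = u ^ 3 := by ring
  have hnc : |u ^ 3 - c| ≤ u ^ 3 := abs_le.2 ⟨by linarith, by linarith⟩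
  have hsplit : (u ^ 3 - c) * q * (1 - q) - z - u⁻¹ * z * (lam * θ - (u ^ 2)⁻¹ * c)
      = (u ^ 3 - c) * (q * (1 - q) - z * p) - lam * θ * z * c * (u ^ 4)⁻¹ := by
    rw [hp]
    field_simp
    ring
  have hbinom : |q * (1 - q) - z * p| ≤ 3 / 2 * (z * p) ^ 2 := by
    have := abs_one_sub_pow_mul_pow_sub_le hp0 hp1 z
    rwa [← hq, show (1 - p) ^ z = 1 - q by rw [hq]; ring] at this
  have hmain : |(u ^ 3 - c) * (q * (1 - q) - z * p)| ≤ 6 * r ^ 2 * (θ ^ 4 * u⁻¹) :=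
    calc |(u ^ 3 - c) * (q * (1 - q) - z * p)|
        ≤ u ^ 3 * (3 / 2 * (z * p) ^ 2) := by
          rw [abs_mul]; exact mul_le_mul hnc hbinom (abs_nonneg _) (by positivity)
      _ ≤ u ^ 3 * (3 / 2 * (2 * r * θ ^ 2 * (u ^ 2)⁻¹) ^ 2) := by
          gcongr
      _ = 6 * r ^ 2 * (θ ^ 4 * u⁻¹) := by field_simp; ring
  have hcross : |lam * θ * z * c * (u ^ 4)⁻¹| ≤ |lam| * T * r ^ 2 * (θ ^ 4 * u⁻¹) :=
    calc |lam * θ * z * c * (u ^ 4)⁻¹| = |lam| * θ * (u ^ 4)⁻¹ * (z * c) := by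
          rw [abs_mul, abs_mul, abs_mul, abs_mul, abs_of_nonneg hθ, abs_of_nonneg hz0,
            abs_of_nonneg hc0, abs_of_pos (by positivity : (0 : ℝ) < (u ^ 4)⁻¹)]
          ring
      _ ≤ |lam| * θ * (u ^ 4)⁻¹ * ((u * θ ^ 2 * r) * (u ^ 2 * θ * T * r)) :=
          mul_le_mul_of_nonneg_left (mul_le_mul hz hc hc0 (hz0.trans hz)) (by positivity)
      _ = |lam| * T * r ^ 2 * (θ ^ 4 * u⁻¹) := by field_simp
  rw [hsplit]
  calc _ ≤ _ := abs_sub _ _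
    _ ≤ _ := add_le_add hmain hcross
    _ = _ := by ring

lemma rpow_natCast_div_three {x : ℝ} (hx : 0 ≤ x) (k : ℕ) :
    x ^ ((k : ℝ) / 3) = (x ^ ((1 : ℝ) / 3)) ^ k := by
  rw [← Real.rpow_natCast, ← Real.rpow_mul hx]
  ring_nf

lemma rpow_neg_natCast_div_three {x : ℝ} (hx : 0 ≤ x) (k : ℕ) :
    x ^ (-(k : ℝ) / 3) = ((x ^ ((1 : ℝ) / 3)) ^ k)⁻¹ := by
  rw [neg_div, Real.rpow_neg hx, rpow_natCast_div_three hx]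

theorem stmt_5_general (lam r T : ℝ)
    (θ : ℕ → ℝ) (hθpos : ∀ n, 0 < θ n)
    (hθ_small : Filter.Tendsto (fun n : ℕ => θ n * (n : ℝ) ^ (-(1 : ℝ) / 3))
      Filter.atTop (nhds 0))
    (p : ℕ → ℝ) (hp : ∀ n : ℕ, p n = (n : ℝ)⁻¹ + lam * θ n * (n : ℝ) ^ (-(4 : ℝ) / 3))
    (q : ℕ → ℕ → ℝ) (hq : ∀ (n : ℕ) (z : ℕ), q n z = 1 - (1 - p n) ^ z)
    (σsq : ℕ → ℕ → ℕ → ℝ)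
    (hσ : ∀ (n : ℕ) (z c : ℕ), σsq n z c = ((n : ℝ) - (c : ℝ)) * q n z * (1 - q n z)) :
    ∃ K : ℝ, 0 < K ∧ ∃ N : ℕ, ∀ n : ℕ, N ≤ n → ∀ z c : ℕ,
      (z : ℝ) ≤ (n : ℝ) ^ ((1 : ℝ) / 3) * (θ n) ^ 2 * r →
      (c : ℝ) ≤ (n : ℝ) ^ ((2 : ℝ) / 3) * θ n * T * r →
      |σsq n z c - (z : ℝ)
          - (n : ℝ) ^ (-(1 : ℝ) / 3) * (z : ℝ)
            * (lam * θ n - (n : ℝ) ^ (-(2 : ℝ) / 3) * (c : ℝ))|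
        ≤ K * ((θ n) ^ 4 * (n : ℝ) ^ (-(1 : ℝ) / 3) + 1) := by
  set C := 6 * r ^ 2 + |lam| * T * r ^ 2
  refine ⟨|C| + 1, by positivity, ?_⟩
  have hsmall (a : ℝ) : ∀ᶠ n : ℕ in atTop, a * (θ n * (n : ℝ) ^ (-(1 : ℝ) / 3)) ≤ 1 := by
    have := hθ_small.const_mul a
    rw [mul_zero] at this
    exact this.eventually_le_const one_pos
  obtain ⟨N, hN⟩ := eventually_atTop.1
    ((hsmall |lam|).and ((hsmall (T * r)).and (eventually_ge_atTop 2)))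
  refine ⟨N, fun n hn z c hz hc => ?_⟩
  obtain ⟨hlam, hTr, hn2⟩ := hN n hn
  have hn0 : (0 : ℝ) ≤ n := n.cast_nonneg
  set u := (n : ℝ) ^ ((1 : ℝ) / 3)
  have hu0 : 0 < u := Real.rpow_pos_of_pos (by positivity) _
  have hu3 : u ^ 3 = n := by
    rw [← rpow_natCast_div_three hn0 3]
    norm_num
  have hu2 : (n : ℝ) ^ ((2 : ℝ) / 3) = u ^ 2 := by exact_mod_cast rpow_natCast_div_three hn0 2
  have hu1' : (n : ℝ) ^ (-(1 : ℝ) / 3) = u⁻¹ := by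
    simpa only [pow_one, Nat.cast_one] using rpow_neg_natCast_div_three hn0 1
  have hu2' : (n : ℝ) ^ (-(2 : ℝ) / 3) = (u ^ 2)⁻¹ := by
    exact_mod_cast rpow_neg_natCast_div_three hn0 2
  have hu4' : (n : ℝ) ^ (-(4 : ℝ) / 3) = (u ^ 4)⁻¹ := by
    exact_mod_cast rpow_neg_natCast_div_three hn0 4
  rw [hu1', ← mul_assoc, mul_inv_le_iff₀ hu0, one_mul] at hlam hTr
  rw [hu2] at hc
  rw [hσ, hu1', hu2', ← hu3]
  calc _ ≤ C * (θ n ^ 4 * u⁻¹) :=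
        abs_variance_expansion_le (by rw [hu3]; exact_mod_cast hn2) (hθpos n).le hlam hTr
          (by rw [hp, hu4', hu3]) (hq n z) hz hc
    _ ≤ (|C| + 1) * (θ n ^ 4 * u⁻¹ + 1) := by
        have : 0 ≤ θ n ^ 4 * u⁻¹ := by positivity
        nlinarith [le_abs_self C, abs_nonneg C]

/-- Lemma 6.1 (variance expansion). Let `θ n > 0`, `θ n → ∞`, `θ n = o(n^(1/3))`. With
`p n = n⁻¹ + λ θ n * n^(-4/3)`, `q n z = 1 - (1 - p n)^z` and variance
`σ² n z c = (n - c) * q n z * (1 - q n z)` of `Bin(n - c, q n z)`, there exist `K > 0`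
and `N` such that for all `n ≥ N` and all `(z, c) ∈ Ω_n^θ` (i.e. `z ≤ n^(1/3) θ_n² r`
and `c ≤ n^(2/3) θ_n T r`),
`|σ²(n,z,c) - z - n^(-1/3) z (λ θ_n - n^(-2/3) c)| ≤ K (θ_n⁴ n^(-1/3) + 1)`. -/
theorem stmt_5 (lam r T : ℝ) (hr : 0 < r) (hT : 0 < T)
    (θ : ℕ → ℝ) (hθpos : ∀ n, 0 < θ n)
    (hθ_top : Filter.Tendsto θ Filter.atTop Filter.atTop)
    (hθ_small : Filter.Tendsto (fun n : ℕ => θ n * (n : ℝ) ^ (-(1 : ℝ) / 3))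
      Filter.atTop (nhds 0))
    (p : ℕ → ℝ) (hp : ∀ n : ℕ, p n = (n : ℝ)⁻¹ + lam * θ n * (n : ℝ) ^ (-(4 : ℝ) / 3))
    (q : ℕ → ℕ → ℝ) (hq : ∀ (n : ℕ) (z : ℕ), q n z = 1 - (1 - p n) ^ z)
    (σsq : ℕ → ℕ → ℕ → ℝ)
    (hσ : ∀ (n : ℕ) (z c : ℕ), σsq n z c = ((n : ℝ) - (c : ℝ)) * q n z * (1 - q n z)) :
    ∃ K : ℝ, 0 < K ∧ ∃ N : ℕ, ∀ n : ℕ, N ≤ n → ∀ z c : ℕ,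
      (z : ℝ) ≤ (n : ℝ) ^ ((1 : ℝ) / 3) * (θ n) ^ 2 * r →
      (c : ℝ) ≤ (n : ℝ) ^ ((2 : ℝ) / 3) * θ n * T * r →
      |σsq n z c - (z : ℝ)
          - (n : ℝ) ^ (-(1 : ℝ) / 3) * (z : ℝ)
            * (lam * θ n - (n : ℝ) ^ (-(2 : ℝ) / 3) * (c : ℝ))|
        ≤ K * ((θ n) ^ 4 * (n : ℝ) ^ (-(1 : ℝ) / 3) + 1) :=
  stmt_5_general lam r T θ hθpos hθ_small p hp q hq σsq hσ
end

section
/- There exist a constant K > 0 and N ∈ ℕ such that for all n ≥ N and all pairs (z,c) ∈ Ω_n^θ (i.e. z,c ∈ ℕ with z ≤ n^{1/3} θ_n² r and c ≤ n^{2/3} θ_n T r), one has κ_θ(n,z,c) ≤ K (θ_n^{12} + θ_n^{8} n^{1/3} + θ_n^{4} n^{2/3}), where κ_θ(n,z,c) is the fourth moment of β_θ(n,z,c) − z. (Lemma 6.1, fourth-moment bound.) -/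
/-!
Write `m = n - c`, `a = m q` and `d = a - z`. The factorial moments of the binomial law give the
exact expansion `E (β - z)^4 = d^4 + 6 d^2 a(1-q) + 4 d a(1-q)(1-2q) + a(1-q)(1 + 3(m-2) q(1-q))`,
which is at most `d^4 + 6 a d^2 + 4 a |d| + 3 a^2 + a`. Since `zp - (zp)^2/2 ≤ q ≤ zp` and
`np = 1 + λ θ_n n^(-1/3)`, on `Ω_n^θ` the mean is `a = O(n^(1/3) θ_n^2)` while the drift is only
`d = O(θ_n^3)`; the three orders `θ^12`, `θ^8 n^(1/3)`, `θ^4 n^(2/3)` come from `d^4`, `a d^2` and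
`a^2`.
-/

open Finset

theorem Nat.choose_mul_descFactorial_of_le {m j k : ℕ} (hkj : k ≤ j) :
    m.choose j * j.descFactorial k = m.descFactorial k * (m - k).choose (j - k) := by
  rw [Nat.descFactorial_eq_factorial_mul_choose, Nat.descFactorial_eq_factorial_mul_choose,
    mul_left_comm, Nat.choose_mul hkj, mul_assoc]

theorem sum_choose_mul_descFactorial_mul_pow {R : Type*} [CommSemiring R] (m k : ℕ) (x y : R) :
    ∑ j ∈ range (m + 1), (m.choose j * j.descFactorial k : R) * x ^ j * y ^ (m - j)
      = m.descFactorial k * x ^ k * (x + y) ^ (m - k) := by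
  rcases lt_or_ge m k with hmk | hkm
  · rw [Nat.descFactorial_of_lt hmk, Nat.cast_zero, zero_mul, zero_mul]
    refine sum_eq_zero fun j hj => ?_
    rw [Nat.descFactorial_of_lt (by grind), Nat.cast_zero, mul_zero, zero_mul, zero_mul]
  obtain ⟨l, rfl⟩ := Nat.exists_eq_add_of_le hkm
  rw [show k + l + 1 = k + (l + 1) by ring, sum_range_add, add_pow, mul_sum,
    Nat.add_sub_cancel_left, sum_eq_zero fun j hj => by
    rw [Nat.descFactorial_of_lt (mem_range.mp hj), Nat.cast_zero, mul_zero, zero_mul, zero_mul],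
    zero_add]
  refine sum_congr rfl fun i hi => ?_
  have hi : i ≤ l := Nat.lt_succ_iff.mp (mem_range.mp hi)
  rw [← Nat.cast_mul, Nat.choose_mul_descFactorial_of_le (Nat.le_add_right k i),
    Nat.add_sub_cancel_left, Nat.add_sub_cancel_left, Nat.cast_mul,
    show k + l - (k + i) = l - i by omega]
  ring

theorem cast_descFactorial_eq_prod (R : Type*) [CommRing R] (j k : ℕ) :
    (j.descFactorial k : R) = ∏ i ∈ range k, ((j : R) - i) := by
  rw [← descPochhammer_eval_eq_descFactorial, descPochhammer_eval_eq_prod_range]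

def binomFourthMomentAbout (m : ℕ) (q z : ℝ) : ℝ :=
  ∑ j ∈ range (m + 1), (m.choose j : ℝ) * q ^ j * (1 - q) ^ (m - j) * ((j : ℝ) - z) ^ 4

theorem binomFourthMomentAbout_eq (m : ℕ) (q z : ℝ) :
    binomFourthMomentAbout m q z
      = (m * q - z) ^ 4 + 6 * (m * q - z) ^ 2 * (m * q * (1 - q))
        + 4 * (m * q - z) * (m * q * (1 - q) * (1 - 2 * q))
        + m * q * (1 - q) * (1 + 3 * (m - 2) * q * (1 - q)) := by
  have factorialMoment (k : ℕ) : ∑ j ∈ range (m + 1),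
      (m.choose j : ℝ) * q ^ j * (1 - q) ^ (m - j) * ∏ i ∈ range k, ((j : ℝ) - i)
        = (∏ i ∈ range k, ((m : ℝ) - i)) * q ^ k := by
    have h := sum_choose_mul_descFactorial_mul_pow m k q (1 - q)
    rw [add_sub_cancel, one_pow, mul_one, cast_descFactorial_eq_prod] at h
    rw [← h]
    refine sum_congr rfl fun j _ => ?_
    rw [cast_descFactorial_eq_prod]
    ring
  -- `(j - z)^4` in the basis of falling factorials of `j`
  have expand (j : ℝ) : (j - z) ^ 4
      = ∏ i ∈ range 4, (j - i) + (6 - 4 * z) * ∏ i ∈ range 3, (j - i)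
        + (7 - 12 * z + 6 * z ^ 2) * ∏ i ∈ range 2, (j - i)
        + (1 - 4 * z + 6 * z ^ 2 - 4 * z ^ 3) * ∏ i ∈ range 1, (j - i)
        + z ^ 4 * ∏ i ∈ range 0, (j - i) := by
    simp only [prod_range_succ, prod_range_zero, Nat.cast_zero, Nat.cast_one, Nat.cast_ofNat]
    ring
  have hsum : binomFourthMomentAbout m q z
      = (∏ i ∈ range 4, ((m : ℝ) - i)) * q ^ 4
        + (6 - 4 * z) * ((∏ i ∈ range 3, ((m : ℝ) - i)) * q ^ 3)
        + (7 - 12 * z + 6 * z ^ 2) * ((∏ i ∈ range 2, ((m : ℝ) - i)) * q ^ 2)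
        + (1 - 4 * z + 6 * z ^ 2 - 4 * z ^ 3) * ((∏ i ∈ range 1, ((m : ℝ) - i)) * q ^ 1)
        + z ^ 4 * ((∏ i ∈ range 0, ((m : ℝ) - i)) * q ^ 0) := by
    simp only [binomFourthMomentAbout, expand, ← factorialMoment, mul_sum, ← sum_add_distrib]
    refine sum_congr rfl fun j _ => ?_
    ring
  rw [hsum]
  simp only [prod_range_succ, prod_range_zero, Nat.cast_zero, Nat.cast_one, Nat.cast_ofNat]
  ring

theorem binomFourthMomentAbout_le (m : ℕ) {q : ℝ} (hq0 : 0 ≤ q) (hq1 : q ≤ 1) (z : ℝ) :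
    binomFourthMomentAbout m q z
      ≤ (m * q - z) ^ 4 + 6 * (m * q) * (m * q - z) ^ 2 + 4 * (m * q) * |m * q - z|
        + 3 * (m * q) ^ 2 + m * q := by
  rw [binomFourthMomentAbout_eq]
  set a := (m : ℝ) * q
  set d := (m : ℝ) * q - z
  have ha : 0 ≤ a := by positivity
  have hvar : a * (1 - q) ≤ a := by nlinarith
  have hthird : d * (a * (1 - q) * (1 - 2 * q)) ≤ |d| * a := by
    have h : |(1 - q) * (1 - 2 * q)| ≤ 1 := by
      rw [abs_mul, abs_of_nonneg (by linarith : 0 ≤ 1 - q)]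
      exact mul_le_one₀ (by linarith) (abs_nonneg _) (abs_le.mpr ⟨by linarith, by linarith⟩)
    calc d * (a * (1 - q) * (1 - 2 * q)) ≤ |d * (a * ((1 - q) * (1 - 2 * q)))| := by
          rw [← mul_assoc a]; exact le_abs_self _
      _ ≤ |d| * a := by
          rw [abs_mul, abs_mul, abs_of_nonneg ha]
          exact mul_le_mul_of_nonneg_left (mul_le_of_le_one_right ha h) (abs_nonneg d)
  have hfourth : a * (1 - q) * (1 + 3 * (m - 2) * q * (1 - q)) ≤ 3 * a ^ 2 + a := by
    have h : ((m : ℝ) - 2) * (1 - q) ^ 2 ≤ m := by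
      rcases le_or_gt (m : ℝ) 2 with hm | hm <;> nlinarith [Nat.cast_nonneg (α := ℝ) m]
    have hq : 0 ≤ a * q := by positivity
    nlinarith [mul_le_mul_of_nonneg_left h hq]
  nlinarith [mul_le_mul_of_nonneg_left hvar (sq_nonneg d)]

theorem one_sub_pow_le_one_sub_mul_add_sq_div_two {p : ℝ} (hp0 : 0 ≤ p) (hp1 : p ≤ 1) (z : ℕ) :
    (1 - p) ^ z ≤ 1 - z * p + (z * p) ^ 2 / 2 := by
  induction z with
  | zero => simp
  | succ z ih =>
    calc (1 - p) ^ (z + 1) = (1 - p) * (1 - p) ^ z := pow_succ' _ _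
      _ ≤ (1 - p) * (1 - z * p + (z * p) ^ 2 / 2) := by gcongr
      _ ≤ 1 - ↑(z + 1) * p + (↑(z + 1) * p) ^ 2 / 2 := by
        push_cast; nlinarith [sq_nonneg (z * p), mul_nonneg (sq_nonneg (z * p)) hp0]

section

variable {N c p ε : ℝ} (z : ℕ)

theorem sub_mul_one_sub_one_sub_pow_le (hp0 : 0 ≤ p) (hp1 : p ≤ 1) (hc : 0 ≤ c) (hcN : c ≤ N) :
    (N - c) * (1 - (1 - p) ^ z) ≤ N * p * z := by
  have hq0 : 0 ≤ 1 - (1 - p) ^ z := sub_nonneg.mpr (pow_le_one₀ (by linarith) (by linarith))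
  have hq : 1 - (1 - p) ^ z ≤ z * p := by
    have := one_add_mul_le_pow (show -2 ≤ -p by linarith) z
    rw [← sub_eq_add_neg] at this
    linarith
  calc (N - c) * (1 - (1 - p) ^ z) ≤ N * (1 - (1 - p) ^ z) := by gcongr; linarith
    _ ≤ N * (z * p) := by gcongr; linarith
    _ = N * p * z := by ring

theorem abs_sub_mul_one_sub_one_sub_pow_sub_le (hp0 : 0 ≤ p) (hp1 : p ≤ 1) (hc : 0 ≤ c)
    (hcN : c ≤ N) (hNp : N * p = 1 + ε) :
    |(N - c) * (1 - (1 - p) ^ z) - z| ≤ |ε| * z + c * (z * p) + N * (z * p) ^ 2 / 2 := by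
  have hupper := sub_mul_one_sub_one_sub_pow_le z hp0 hp1 hc hcN
  have hlower : (N - c) * (z * p - (z * p) ^ 2 / 2) ≤ (N - c) * (1 - (1 - p) ^ z) := by
    have := one_sub_pow_le_one_sub_mul_add_sq_div_two hp0 hp1 z
    exact mul_le_mul_of_nonneg_left (by linarith) (by linarith)
  have hz : (0 : ℝ) ≤ z := Nat.cast_nonneg z
  have hmean : N * p * z = z + ε * z := by rw [hNp]; ring
  have hN : 0 ≤ N * (z * p) ^ 2 := mul_nonneg (hc.trans hcN) (sq_nonneg _)
  rw [abs_le]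
  constructor
  · nlinarith [mul_nonneg hc (sq_nonneg (z * p)), mul_le_mul_of_nonneg_right (neg_abs_le ε) hz]
  · nlinarith [mul_le_mul_of_nonneg_right (le_abs_self ε) hz, mul_nonneg hc (mul_nonneg hz hp0)]

end

def quarticConst (A C : ℝ) : ℝ := C ^ 4 + 6 * A * C ^ 2 + 4 * A * C + A + 3 * A ^ 2

theorem fourth_moment_terms_le {a d t u A C : ℝ} (ht : 1 ≤ t) (hu : 0 ≤ u) (hA : 0 ≤ A)
    (hC : 0 ≤ C) (ha0 : 0 ≤ a) (ha : a ≤ A * (u * t ^ 2)) (hd : |d| ≤ C * t ^ 3) :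
    d ^ 4 + 6 * a * d ^ 2 + 4 * a * |d| + 3 * a ^ 2 + a
      ≤ quarticConst A C * (t ^ 12 + t ^ 8 * u + t ^ 4 * u ^ 2) := by
  unfold quarticConst
  have ht0 : 0 ≤ t := by linarith
  have h4 : d ^ 4 ≤ C ^ 4 * t ^ 12 := by
    calc d ^ 4 = |d| ^ 4 := ((by decide : Even 4).pow_abs d).symm
      _ ≤ (C * t ^ 3) ^ 4 := by gcongr
      _ = C ^ 4 * t ^ 12 := by ring
  have h2 : a * d ^ 2 ≤ A * C ^ 2 * (t ^ 8 * u) := by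
    calc a * d ^ 2 = a * |d| ^ 2 := by rw [sq_abs]
      _ ≤ A * (u * t ^ 2) * (C * t ^ 3) ^ 2 := by gcongr
      _ = A * C ^ 2 * (t ^ 8 * u) := by ring
  have h1 : a * |d| ≤ A * C * (t ^ 8 * u) := by
    calc a * |d| ≤ A * (u * t ^ 2) * (C * t ^ 3) := by gcongr
      _ = A * C * (t ^ 5 * u) := by ring
      _ ≤ A * C * (t ^ 8 * u) := by gcongr; norm_num
  have h0 : a ≤ A * (t ^ 8 * u) := by
    calc a ≤ A * (u * t ^ 2) := ha
      _ = A * (t ^ 2 * u) := by ring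
      _ ≤ A * (t ^ 8 * u) := by gcongr; norm_num
  have hsq : a ^ 2 ≤ A ^ 2 * (t ^ 4 * u ^ 2) := by
    calc a ^ 2 ≤ (A * (u * t ^ 2)) ^ 2 := by gcongr
      _ = A ^ 2 * (t ^ 4 * u ^ 2) := by ring
  have hX : 0 ≤ t ^ 12 := by positivity
  have hY : 0 ≤ t ^ 8 * u := by positivity
  have hZ : 0 ≤ t ^ 4 * u ^ 2 := by positivity
  nlinarith [mul_nonneg (by positivity : 0 ≤ 6 * A * C ^ 2 + 4 * A * C + A + 3 * A ^ 2) hX,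
    mul_nonneg (by positivity : 0 ≤ C ^ 4 + 3 * A ^ 2) hY,
    mul_nonneg (by positivity : 0 ≤ C ^ 4 + 6 * A * C ^ 2 + 4 * A * C + A) hZ]

section Window

-- `u`, `t` and `s` stand for `n^(1/3)`, `θ_n` and `θ_n n^(-1/3)`.
variable {lam r T u s t p : ℝ} {n c z : ℕ}

theorem abs_mul_sub_one_le_of_window (hs0 : 0 ≤ s) (hnp : n * p = 1 + lam * s)
    (hlam : |lam| * s ≤ 1 / 2) : |n * p - 1| ≤ 1 / 2 := by
  rwa [hnp, add_sub_cancel_left, abs_mul, abs_of_nonneg hs0]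

theorem mem_Icc_of_abs_mul_sub_one_le (hn : 2 ≤ n) (hnp : |n * p - 1| ≤ 1 / 2) :
    p ∈ Set.Icc 0 1 := by
  have hn2 : (2 : ℝ) ≤ n := by exact_mod_cast hn
  have hp0 : 0 ≤ p :=
    nonneg_of_mul_nonneg_right (a := (n : ℝ)) (by linarith [(abs_le.mp hnp).1]) (by linarith)
  exact ⟨hp0, by nlinarith [(abs_le.mp hnp).2]⟩

theorem sq_mul_mul_le_of_window (hu : 0 < u) (hn : (n : ℝ) = u ^ 3) (hp0 : 0 ≤ p)
    (hnp : |n * p - 1| ≤ 1 / 2) (hz : (z : ℝ) ≤ u * t ^ 2 * r) :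
    u ^ 2 * (z * p) ≤ 3 / 2 * r * t ^ 2 := by
  refine le_of_mul_le_mul_right ?_ hu
  calc u ^ 2 * (z * p) * u = z * (n * p) := by rw [hn]; ring
    _ ≤ (u * t ^ 2 * r) * (3 / 2) :=
        mul_le_mul hz (by linarith [(abs_le.mp hnp).2]) (by positivity)
          ((Nat.cast_nonneg z).trans hz)
    _ = 3 / 2 * r * t ^ 2 * u := by ring

theorem abs_drift_le_of_window (hr : 0 ≤ r) (hT : 0 ≤ T) (hu : 0 < u) (hn : (n : ℝ) = u ^ 3)
    (hts : t = s * u) (hs0 : 0 ≤ s) (hs1 : s ≤ 1) (hp0 : 0 ≤ p) (hp1 : p ≤ 1)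
    (hnp : n * p = 1 + lam * s) (hlam : |lam| * s ≤ 1 / 2) (hcn : (c : ℝ) ≤ n)
    (hz : (z : ℝ) ≤ u * t ^ 2 * r) (hc : (c : ℝ) ≤ u ^ 2 * t * T * r) :
    |(n - c : ℝ) * (1 - (1 - p) ^ z) - z| ≤ (|lam| * r + 2 * T * r ^ 2 + 2 * r ^ 2) * t ^ 3 := by
  have hzp := sq_mul_mul_le_of_window hu hn hp0 (abs_mul_sub_one_le_of_window hs0 hnp hlam) hz
  refine (abs_sub_mul_one_sub_one_sub_pow_sub_le z hp0 hp1 (Nat.cast_nonneg c) hcn hnp).trans ?_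
  have h1 : |lam * s| * z ≤ |lam| * r * t ^ 3 := by
    calc |lam * s| * z ≤ |lam| * s * (u * t ^ 2 * r) := by
          rw [abs_mul, abs_of_nonneg hs0]; gcongr
      _ = |lam| * r * t ^ 3 := by rw [hts]; ring
  have ht0 : 0 ≤ t := hts ▸ mul_nonneg hs0 hu.le
  have h2 : c * (z * p) ≤ 2 * T * r ^ 2 * t ^ 3 := by
    calc c * (z * p) ≤ u ^ 2 * t * T * r * (z * p) := by gcongr
      _ = t * T * r * (u ^ 2 * (z * p)) := by ring
      _ ≤ t * T * r * (3 / 2 * r * t ^ 2) := by gcongr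
      _ ≤ 2 * T * r ^ 2 * t ^ 3 := by
          nlinarith [show 0 ≤ T * r ^ 2 * t ^ 3 by positivity]
  have h3 : (n : ℝ) * (z * p) ^ 2 / 2 ≤ 2 * r ^ 2 * t ^ 3 := by
    calc (n : ℝ) * (z * p) ^ 2 / 2 = (u ^ 2 * (z * p)) ^ 2 / (2 * u) := by
          rw [hn]; field_simp
      _ ≤ (3 / 2 * r * t ^ 2) ^ 2 / (2 * u) := by gcongr
      _ = 9 / 8 * r ^ 2 * t ^ 3 * s := by rw [hts]; field_simp; ring
      _ ≤ 2 * r ^ 2 * t ^ 3 := by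
          nlinarith [show 0 ≤ r ^ 2 * t ^ 3 by positivity]
  linarith

theorem cast_le_of_window (hu : 0 < u) (hn : (n : ℝ) = u ^ 3) (hts : t = s * u)
    (hTr : T * r * s ≤ 1) (hc : (c : ℝ) ≤ u ^ 2 * t * T * r) : (c : ℝ) ≤ n := by
  calc (c : ℝ) ≤ u ^ 3 * (T * r * s) := by rw [hts] at hc; linarith
    _ ≤ n := by rw [hn]; exact mul_le_of_le_one_right (by positivity) hTr

theorem mean_le_of_window (hp0 : 0 ≤ p) (hp1 : p ≤ 1) (hnp : |n * p - 1| ≤ 1 / 2)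
    (hcn : (c : ℝ) ≤ n) (hz : (z : ℝ) ≤ u * t ^ 2 * r) :
    (n - c : ℝ) * (1 - (1 - p) ^ z) ≤ 3 / 2 * r * (u * t ^ 2) := by
  calc (n - c : ℝ) * (1 - (1 - p) ^ z) ≤ n * p * z :=
        sub_mul_one_sub_one_sub_pow_le z hp0 hp1 (Nat.cast_nonneg c) hcn
    _ ≤ 3 / 2 * (u * t ^ 2 * r) := by
        gcongr
        linarith [(abs_le.mp hnp).2]
    _ = 3 / 2 * r * (u * t ^ 2) := by ring

theorem binomFourthMomentAbout_le_of_window (hr : 0 ≤ r) (hT : 0 ≤ T) (hu : 0 < u)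
    (hn : (n : ℝ) = u ^ 3) (hn2 : 2 ≤ n) (ht : 1 ≤ t) (hts : t = s * u) (hs0 : 0 ≤ s)
    (hs1 : s ≤ 1) (hnp : n * p = 1 + lam * s) (hlam : |lam| * s ≤ 1 / 2) (hTr : T * r * s ≤ 1)
    (hz : (z : ℝ) ≤ u * t ^ 2 * r) (hc : (c : ℝ) ≤ u ^ 2 * t * T * r) :
    binomFourthMomentAbout (n - c) (1 - (1 - p) ^ z) z
      ≤ quarticConst (3 / 2 * r) (|lam| * r + 2 * T * r ^ 2 + 2 * r ^ 2)
        * (t ^ 12 + t ^ 8 * u + t ^ 4 * u ^ 2) := by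
  have hnp' := abs_mul_sub_one_le_of_window hs0 hnp hlam
  obtain ⟨hp0, hp1⟩ := mem_Icc_of_abs_mul_sub_one_le hn2 hnp'
  have hcn := cast_le_of_window hu hn hts hTr hc
  have hq0 : 0 ≤ 1 - (1 - p) ^ z := sub_nonneg.mpr (pow_le_one₀ (by linarith) (by linarith))
  have hq1 : 1 - (1 - p) ^ z ≤ 1 := sub_le_self _ (pow_nonneg (by linarith) _)
  refine (binomFourthMomentAbout_le (n - c) hq0 hq1 z).trans ?_
  rw [Nat.cast_sub (by exact_mod_cast hcn)]
  exact fourth_moment_terms_le ht hu.le (by positivity) (by positivity)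
    (mul_nonneg (by linarith) hq0) (mean_le_of_window hp0 hp1 hnp' hcn hz)
    (abs_drift_le_of_window hr hT hu hn hts hs0 hs1 hp0 hp1 hnp hlam hcn hz hc)

end Window

theorem rpow_one_third_pow_three {x : ℝ} (hx : 0 ≤ x) : (x ^ ((1 : ℝ) / 3)) ^ 3 = x := by
  rw [← Real.rpow_natCast, ← Real.rpow_mul hx]; norm_num

theorem rpow_two_thirds {x : ℝ} (hx : 0 ≤ x) : x ^ ((2 : ℝ) / 3) = (x ^ ((1 : ℝ) / 3)) ^ 2 := by
  rw [← Real.rpow_natCast, ← Real.rpow_mul hx]; norm_num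

theorem rpow_neg_one_third_mul_rpow_one_third {x : ℝ} (hx : 0 < x) :
    x ^ (-(1 : ℝ) / 3) * x ^ ((1 : ℝ) / 3) = 1 := by
  rw [← Real.rpow_add hx]; norm_num

theorem mul_rpow_neg_four_thirds {x : ℝ} (hx : 0 < x) :
    x * x ^ (-(4 : ℝ) / 3) = x ^ (-(1 : ℝ) / 3) := by
  rw [← Real.rpow_one_add' hx.le (by norm_num)]; norm_num

theorem stmt_6_general (lam r T : ℝ) (hr : 0 < r) (hT : 0 < T)
    (θ : ℕ → ℝ)
    (hθ_top : Filter.Tendsto θ Filter.atTop Filter.atTop)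
    (hθ_small : Filter.Tendsto (fun n : ℕ => θ n * (n : ℝ) ^ (-(1 : ℝ) / 3))
      Filter.atTop (nhds 0))
    (p : ℕ → ℝ) (hp : ∀ n : ℕ, p n = (n : ℝ)⁻¹ + lam * θ n * (n : ℝ) ^ (-(4 : ℝ) / 3))
    (q : ℕ → ℕ → ℝ) (hq : ∀ (n : ℕ) (z : ℕ), q n z = 1 - (1 - p n) ^ z)
    (κ : ℕ → ℕ → ℕ → ℝ)
    (hκ : ∀ (n : ℕ) (z c : ℕ), κ n z c =
      ∑ j ∈ Finset.range (n - c + 1),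
        ((n - c).choose j : ℝ) * (q n z) ^ j * (1 - q n z) ^ (n - c - j)
          * ((j : ℝ) - (z : ℝ)) ^ 4) :
    ∃ K : ℝ, 0 < K ∧ ∃ N : ℕ, ∀ n : ℕ, N ≤ n → ∀ z c : ℕ,
      (z : ℝ) ≤ (n : ℝ) ^ ((1 : ℝ) / 3) * (θ n) ^ 2 * r →
      (c : ℝ) ≤ (n : ℝ) ^ ((2 : ℝ) / 3) * θ n * T * r →
      κ n z c ≤ K * ((θ n) ^ 12 + (θ n) ^ 8 * (n : ℝ) ^ ((1 : ℝ) / 3)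
        + (θ n) ^ 4 * (n : ℝ) ^ ((2 : ℝ) / 3)) := by
  have small (a ε : ℝ) (hε : 0 < ε) :
      ∀ᶠ n : ℕ in Filter.atTop, a * (θ n * (n : ℝ) ^ (-(1 : ℝ) / 3)) ≤ ε :=
    (hθ_small.const_mul a).eventually (Iic_mem_nhds (by rwa [mul_zero]))
  refine ⟨quarticConst (3 / 2 * r) (|lam| * r + 2 * T * r ^ 2 + 2 * r ^ 2),
    by unfold quarticConst; positivity, Filter.eventually_atTop.mp ?_⟩
  filter_upwards [hθ_top.eventually_ge_atTop 1, small |lam| (1 / 2) (by norm_num),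
    small (T * r) 1 one_pos, hθ_small.eventually (Iic_mem_nhds one_pos),
    Filter.eventually_ge_atTop 2] with n ht hlam hTr hs1 hn2 z c hz hc
  set u := (n : ℝ) ^ ((1 : ℝ) / 3)
  set s := θ n * (n : ℝ) ^ (-(1 : ℝ) / 3)
  have hn0 : (0 : ℝ) < n := by positivity
  have hts : θ n = s * u := by rw [mul_assoc, rpow_neg_one_third_mul_rpow_one_third hn0, mul_one]
  have hnp : n * p n = 1 + lam * s := by
    rw [hp, mul_add, mul_inv_cancel₀ hn0.ne', mul_left_comm, mul_rpow_neg_four_thirds hn0]; ring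
  rw [rpow_two_thirds hn0.le] at hc ⊢
  rw [hκ, hq]
  exact binomFourthMomentAbout_le_of_window hr.le hT.le (by positivity)
    (rpow_one_third_pow_three hn0.le).symm hn2 ht hts (by positivity) hs1 hnp hlam hTr hz hc

/-- Lemma 6.1 (fourth-moment bound). Let `θ n > 0`, `θ n → ∞`, `θ n = o(n^(1/3))`. With
`p n = n⁻¹ + λ θ n * n^(-4/3)`, `q n z = 1 - (1 - p n)^z`, and
`κ n z c = E[(β_θ(n,z,c) - z)^4] = ∑_{j=0}^{n-c} C(n-c,j) q^j (1-q)^(n-c-j) (j - z)^4`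
for `β_θ(n,z,c) ~ Bin(n-c, q n z)`, there exist `K > 0` and `N` such that for all
`n ≥ N` and all `(z, c) ∈ Ω_n^θ` (i.e. `z ≤ n^(1/3) θ_n² r` and `c ≤ n^(2/3) θ_n T r`),
`κ(n,z,c) ≤ K (θ_n^12 + θ_n^8 n^(1/3) + θ_n^4 n^(2/3))`. -/
theorem stmt_6 (lam r T : ℝ) (hr : 0 < r) (hT : 0 < T)
    (θ : ℕ → ℝ) (hθpos : ∀ n, 0 < θ n)
    (hθ_top : Filter.Tendsto θ Filter.atTop Filter.atTop)
    (hθ_small : Filter.Tendsto (fun n : ℕ => θ n * (n : ℝ) ^ (-(1 : ℝ) / 3))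
      Filter.atTop (nhds 0))
    (p : ℕ → ℝ) (hp : ∀ n : ℕ, p n = (n : ℝ)⁻¹ + lam * θ n * (n : ℝ) ^ (-(4 : ℝ) / 3))
    (q : ℕ → ℕ → ℝ) (hq : ∀ (n : ℕ) (z : ℕ), q n z = 1 - (1 - p n) ^ z)
    (κ : ℕ → ℕ → ℕ → ℝ)
    (hκ : ∀ (n : ℕ) (z c : ℕ), κ n z c =
      ∑ j ∈ Finset.range (n - c + 1),
        ((n - c).choose j : ℝ) * (q n z) ^ j * (1 - q n z) ^ (n - c - j)
          * ((j : ℝ) - (z : ℝ)) ^ 4) :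
    ∃ K : ℝ, 0 < K ∧ ∃ N : ℕ, ∀ n : ℕ, N ≤ n → ∀ z c : ℕ,
      (z : ℝ) ≤ (n : ℝ) ^ ((1 : ℝ) / 3) * (θ n) ^ 2 * r →
      (c : ℝ) ≤ (n : ℝ) ^ ((2 : ℝ) / 3) * θ n * T * r →
      κ n z c ≤ K * ((θ n) ^ 12 + (θ n) ^ 8 * (n : ℝ) ^ ((1 : ℝ) / 3)
        + (θ n) ^ 4 * (n : ℝ) ^ ((2 : ℝ) / 3)) :=
  stmt_6_general lam r T hr hT θ hθ_top hθ_small p hp q hq κ hκ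
end
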